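/- If a language L over a partitioned alphabet Σ is a visibly pushdown language, then the Myhill–Nerode-type congruence ≡ defined by u₁ ≡ u₂ iff for all matched-response words v, (u₁v ∈ L ↔ u₂v ∈ L), has finitely many equivalence classes on Σ*. -/
import Mathlib


inductive VKind | call | internal | response
deriving DecidableEq

/-- A (nondeterministic) visibly pushdown automaton over alphabet `A`
partitioned by `kind` into call, internal and response letters. -/
structure VPA (A : Type) (kind : A → VKind) where
  Q : Type
  Γ : Type
  [finQ : Fintype Q]
  [finΓ : Fintype Γ]
  init : Q
  accept : Set Q
  /-- transitions on call letters: push one symbol, do not inspect the stack -/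
  δc : Q → A → Set (Q × Γ)
  /-- transitions on internal letters: do not inspect or modify the stack -/
  δi : Q → A → Set Q
  /-- transitions on response letters: pop the topmost stack symbol -/
  δr : Q → A → Γ → Set Q
  /-- transitions on response letters read on the empty stack (bottom symbol) -/
  δb : Q → A → Set Q

namespace VPA

variable {A : Type} {kind : A → VKind}

inductive Steps (M : VPA A kind) : M.Q × List M.Γ → List A → M.Q × List M.Γ → Prop
  | nil (c) : Steps M c [] c
  | call {q s a q' γ w c} : kind a = .call → (q', γ) ∈ M.δc q a →
      Steps M (q', γ :: s) w c → Steps M (q, s) (a :: w) c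
  | internal {q s a q' w c} : kind a = .internal → q' ∈ M.δi q a →
      Steps M (q', s) w c → Steps M (q, s) (a :: w) c
  | pop {q γ s a q' w c} : kind a = .response → q' ∈ M.δr q a γ →
      Steps M (q', s) w c → Steps M (q, γ :: s) (a :: w) c
  | popEmpty {q a q' w c} : kind a = .response → q' ∈ M.δb q a →
      Steps M (q', []) w c → Steps M (q, []) (a :: w) c

/-- A VPA accepts a word if reading it from the initial state with empty stack
can end in an accepting state (with arbitrary stack contents). -/
def Accepts (M : VPA A kind) (w : List A) : Prop :=
  ∃ c : M.Q × List M.Γ, M.Steps (M.init, []) w c ∧ c.1 ∈ M.accept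

end VPA

/-- `L` is a visibly pushdown language over the partition `kind`. -/
def IsVPL {A : Type} (kind : A → VKind) (L : Set (List A)) : Prop :=
  ∃ M : VPA A kind, L = {w | M.Accepts w}

/-- Number of letters of a word whose kind is `k`. -/
def countKind {A : Type} (kind : A → VKind) (k : VKind) (w : List A) : ℕ :=
  w.countP (fun x => decide (kind x = k))

/-- `u` is matched-response: every prefix has at most as many responses as calls. -/
def MR {A : Type} (kind : A → VKind) (u : List A) : Prop :=
  ∀ p : List A, p <+: u →
    countKind kind VKind.response p ≤ countKind kind VKind.call p

/-- `u` is matched-call: every suffix has at most as many calls as responses. -/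
def MC {A : Type} (kind : A → VKind) (u : List A) : Prop :=
  ∀ s : List A, s <:+ u →
    countKind kind VKind.call s ≤ countKind kind VKind.response s

/-- `u` is well-matched: both matched-response and matched-call. -/
def WM {A : Type} (kind : A → VKind) (u : List A) : Prop :=
  MR kind u ∧ MC kind u

namespace VPA

variable {A : Type} {kind : A → VKind} {M : VPA A kind}

theorem steps_append {c₁ c₂ c₃ : M.Q × List M.Γ} {u v : List A}
    (h₁ : M.Steps c₁ u c₂) (h₂ : M.Steps c₂ v c₃) : M.Steps c₁ (u ++ v) c₃ := by
  induction h₁ with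
  | nil => exact h₂
  | call hk hδ _ ih => exact .call hk hδ (ih h₂)
  | internal hk hδ _ ih => exact .internal hk hδ (ih h₂)
  | pop hk hδ _ ih => exact .pop hk hδ (ih h₂)
  | popEmpty hk hδ _ ih => exact .popEmpty hk hδ (ih h₂)

theorem steps_split {u : List A} : ∀ {c₁ c₃ : M.Q × List M.Γ} {v : List A},
    M.Steps c₁ (u ++ v) c₃ → ∃ c₂, M.Steps c₁ u c₂ ∧ M.Steps c₂ v c₃ := by
  induction u with
  | nil => exact fun h => ⟨_, .nil _, h⟩
  | cons a u ih =>
    intro c₁ c₃ v h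
    cases h with
    | call hk hδ h' => obtain ⟨c₂, h₁, h₂⟩ := ih h'; exact ⟨c₂, .call hk hδ h₁, h₂⟩
    | internal hk hδ h' => obtain ⟨c₂, h₁, h₂⟩ := ih h'; exact ⟨c₂, .internal hk hδ h₁, h₂⟩
    | pop hk hδ h' => obtain ⟨c₂, h₁, h₂⟩ := ih h'; exact ⟨c₂, .pop hk hδ h₁, h₂⟩
    | popEmpty hk hδ h' => obtain ⟨c₂, h₁, h₂⟩ := ih h'; exact ⟨c₂, .popEmpty hk hδ h₁, h₂⟩

/-- Stack invariance: if every prefix of `v` has at most `t.length` more responses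
than calls, then a run on `v` from stack `t ++ s` can be replayed with `s`
replaced by any `s'`, ending in the same state. -/
theorem steps_mr : ∀ (v : List A) (t s s' : List M.Γ) (q : M.Q) (c : M.Q × List M.Γ),
    M.Steps (q, t ++ s) v c →
    (∀ p : List A, p <+: v →
      countKind kind VKind.response p ≤ countKind kind VKind.call p + t.length) →
    ∃ c', M.Steps (q, t ++ s') v c' ∧ c'.1 = c.1 := by
  intro v
  induction v with
  | nil =>
    intro t s s' q c h _
    generalize hst : t ++ s = st at h
    cases h
    exact ⟨(q, t ++ s'), .nil _, rfl⟩
  | cons a w ih =>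
    intro t s s' q c h hb
    rcases t with _ | ⟨γ', t₁⟩
    · -- t = [], stack is s
      rw [List.nil_append] at h
      cases h with
      | call hk hδ h' =>
        obtain ⟨c', hs, he⟩ := ih [_] s s' _ c h' (by
          intro p hp
          obtain ⟨r, rfl⟩ := hp
          have := hb (a :: p) ⟨r, rfl⟩
          simp [countKind, List.countP_cons, hk] at this ⊢
          omega)
        exact ⟨c', .call hk hδ hs, he⟩
      | internal hk hδ h' =>
        obtain ⟨c', hs, he⟩ := ih [] s s' _ c h' (by
          intro p hp
          obtain ⟨r, rfl⟩ := hp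
          have := hb (a :: p) ⟨r, rfl⟩
          simp [countKind, List.countP_cons, hk] at this ⊢
          omega)
        exact ⟨c', .internal hk hδ hs, he⟩
      | pop hk hδ h' =>
        have := hb [a] ⟨w, rfl⟩
        simp [countKind, List.countP_cons, hk] at this
      | popEmpty hk hδ h' =>
        have := hb [a] ⟨w, rfl⟩
        simp [countKind, List.countP_cons, hk] at this
    · -- t = γ' :: t₁
      rw [List.cons_append] at h
      cases h with
      | call hk hδ h' =>
        obtain ⟨c', hs, he⟩ := ih (_ :: γ' :: t₁) s s' _ c h' (by
          intro p hp
          obtain ⟨r, rfl⟩ := hp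
          have := hb (a :: p) ⟨r, rfl⟩
          simp [countKind, List.countP_cons, hk] at this ⊢
          omega)
        exact ⟨c', .call hk hδ hs, he⟩
      | internal hk hδ h' =>
        obtain ⟨c', hs, he⟩ := ih (γ' :: t₁) s s' _ c h' (by
          intro p hp
          obtain ⟨r, rfl⟩ := hp
          have := hb (a :: p) ⟨r, rfl⟩
          simp [countKind, List.countP_cons, hk] at this ⊢
          omega)
        exact ⟨c', .internal hk hδ hs, he⟩
      | pop hk hδ h' =>
        obtain ⟨c', hs, he⟩ := ih t₁ s s' _ c h' (by
          intro p hp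
          obtain ⟨r, rfl⟩ := hp
          have := hb (a :: p) ⟨r, rfl⟩
          simp [countKind, List.countP_cons, hk] at this ⊢
          omega)
        exact ⟨c', .pop hk hδ hs, he⟩

end VPA

/-- If `L` is a VPL then the congruence `≡`, identifying words that are
indistinguishable by matched-response suffixes, has finite index on `Σ*`. -/
theorem vpl_mr_congruence_finite_index {A : Type} (kind : A → VKind)
    (L : Set (List A)) (h : IsVPL kind L) :
    Finite (Quot (fun u₁ u₂ : List A =>
      ∀ v : List A, MR kind v → (u₁ ++ v ∈ L ↔ u₂ ++ v ∈ L))) := by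
  obtain ⟨M, rfl⟩ := h
  haveI := M.finQ
  set r : List A → List A → Prop := fun u₁ u₂ =>
    ∀ v : List A, MR kind v → (u₁ ++ v ∈ {w | M.Accepts w} ↔ u₂ ++ v ∈ {w | M.Accepts w})
    with hr
  let f : List A → Set M.Q := fun u => {q | ∃ s, M.Steps (M.init, []) u (q, s)}
  have dir : ∀ u₁ u₂, f u₁ = f u₂ → ∀ v : List A, MR kind v →
      M.Accepts (u₁ ++ v) → M.Accepts (u₂ ++ v) := by
    intro u₁ u₂ hf v hv ⟨c, hs, hacc⟩
    obtain ⟨⟨q, s⟩, h₁, h₂⟩ := VPA.steps_split hs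
    have hq : q ∈ f u₂ := hf ▸ ⟨s, h₁⟩
    obtain ⟨s₂, h₁'⟩ := hq
    obtain ⟨c', hs', he⟩ := VPA.steps_mr v [] s s₂ q c h₂ (by
      intro p hp; simpa using hv p hp)
    exact ⟨c', VPA.steps_append h₁' hs', he ▸ hacc⟩
  have key : ∀ u₁ u₂, f u₁ = f u₂ → r u₁ u₂ := fun u₁ u₂ hf v hv =>
    ⟨dir u₁ u₂ hf v hv, dir u₂ u₁ hf.symm v hv⟩
  haveI : Finite (Quot (fun u₁ u₂ : List A => f u₁ = f u₂)) := by
    apply Finite.of_injective (Quot.lift f (fun _ _ h => h))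
    intro x y
    induction x using Quot.ind
    induction y using Quot.ind
    exact fun h => Quot.sound h
  exact Finite.of_surjective
    (Quot.lift (Quot.mk r) (fun u₁ u₂ h => Quot.sound (key u₁ u₂ h)))
    (fun x => by induction x using Quot.ind with | _ u => exact ⟨Quot.mk _ u, rfl⟩)
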